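/- The two-dimensional mirror shift S_mirror is not sofic. -/

import Mathlib

/-- A cell of the two-dimensional grid `ℤ²`. -/
abbrev Cell : Type := ℤ × ℤ

/-- A configuration over the alphabet `A` is a map `ℤ² → A`. -/
abbrev Config (A : Type) : Type := Cell → A

/-- The translateCfg of a configuration `x` by `u` is `i ↦ x (i + u)`. -/
def translateCfg {A : Type} (u : Cell) (x : Config A) : Config A := fun i => x (i + u)

/-- The product topology on `A^(ℤ²)`, `A` being given the discrete topology. -/
def configTop (A : Type) : TopologicalSpace (Config A) :=
  @Pi.topologicalSpace Cell (fun _ => A) (fun _ => ⊥)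

/-- A shift (space) over `A`: a set of configurations invariant under all translations
and closed in the product topology (`A` discrete). -/
def IsShiftSpace {A : Type} (S : Set (Config A)) : Prop :=
  (∀ (u : Cell) (x : Config A), x ∈ S → translateCfg u x ∈ S) ∧
    @IsClosed (Config A) (configTop A) S

/-- A finite pattern: a function `P : F → A` with `F ⊆ ℤ²` finite. -/
structure Pattern (A : Type) where
  supp : Finset Cell
  val : supp → A

/-- `P` occurs in `x` if some translateCfg of `x` agrees with `P` on its support. -/
def Pattern.OccursIn {A : Type} (P : Pattern A) (x : Config A) : Prop :=
  ∃ u : Cell, ∀ i : P.supp, x ((i : Cell) + u) = P.val i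

/-- The shift defined by a set `F` of forbidden finite patterns. -/
def shiftOf {A : Type} (F : Set (Pattern A)) : Set (Config A) :=
  { x | ∀ P ∈ F, ¬ P.OccursIn x }

/-- A shift of finite type: a shift definable by a finite set of forbidden finite patterns. -/
def IsSFT {A : Type} (S : Set (Config A)) : Prop :=
  ∃ F : Set (Pattern A), F.Finite ∧ S = shiftOf F

/-- A sofic shift: a coordinatewise projection of a shift of finite type
over some finite alphabet. -/
def IsSofic {A : Type} (S : Set (Config A)) : Prop :=
  ∃ (A' : Type) (_ : Fintype A') (S' : Set (Config A')) (π : A' → A),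
    IsSFT S' ∧ S = (fun y => π ∘ y) '' S'

/-- The cell of `ℤ²` corresponding to an index in the `n × n` square `{0,…,n−1}²`. -/
def toCell {n : ℕ} (q : Fin n × Fin n) : Cell := ((q.1 : ℤ), (q.2 : ℤ))

/-- An `n × n` square pattern, i.e. a pattern with support `B_n = {0,…,n−1}²`. -/
abbrev SqPattern (A : Type) (n : ℕ) : Type := Fin n × Fin n → A

/-- An `n × n` square pattern occurs in `x` if some translateCfg of `x` agrees with it. -/
def SqOccursIn {A : Type} {n : ℕ} (P : SqPattern A n) (x : Config A) : Prop :=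
  ∃ u : Cell, ∀ q : Fin n × Fin n, x (toCell q + u) = P q

/-- A pattern is globally admissible for `S` if it occurs in some configuration of `S`. -/
def SqGloballyAdmissible {A : Type} {n : ℕ} (S : Set (Config A)) (P : SqPattern A n) : Prop :=
  ∃ x ∈ S, SqOccursIn P x

/-- Membership in the square `B_n = {0,…,n−1}² ⊆ ℤ²`. -/
def inBn (n : ℕ) (p : Cell) : Prop :=
  0 ≤ p.1 ∧ p.1 < (n : ℤ) ∧ 0 ≤ p.2 ∧ p.2 < (n : ℤ)

instance (n : ℕ) (p : Cell) : Decidable (inBn n p) := by unfold inBn; infer_instance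

/-- A pattern on `F_n = ℤ² \ B_n`, the complement of the `n × n` square. -/
abbrev ExtPattern (A : Type) (n : ℕ) : Type := { p : Cell // ¬ inBn n p } → A

/-- The configuration `P ∪ Q`, equal to `P` on `B_n` and to `Q` on `F_n`. -/
def glue {A : Type} {n : ℕ} (P : SqPattern A n) (Q : ExtPattern A n) : Config A :=
  fun p =>
    if h : inBn n p then
      P (⟨p.1.toNat, by unfold inBn at h; omega⟩, ⟨p.2.toNat, by unfold inBn at h; omega⟩)
    else Q ⟨p, h⟩

/-- The extension set `Ext_S(P) = {Q : F_n → A | P ∪ Q ∈ S}`. -/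
def ExtSet {A : Type} {n : ℕ} (S : Set (Config A)) (P : SqPattern A n) :
    Set (ExtPattern A n) :=
  { Q | glue P Q ∈ S }

/-- A finite sequence of sets is an increasing-union chain if no set is contained in
the union of the preceding ones. -/
def IncreasingUnionChain {β : Type} {m : ℕ} (T : Fin m → Set β) : Prop :=
  ∀ i : Fin m, ¬ T i ⊆ ⋃ (j : Fin m) (_ : j < i), T j

/-- The three-letter alphabet of the mirror shift. -/
inductive Letter : Type
  | black
  | white
  | red
deriving DecidableEq

/-- The two-dimensional mirror shift: configurations with no red cell, or configurations
with a single infinite horizontal red row at height `j₀` and two half-planes of black and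
white cells that are mirror-symmetric with respect to that row. -/
def mirrorShift : Set (Config Letter) :=
  { x | (∀ p : Cell, x p ≠ Letter.red) ∨
        (∃ j0 : ℤ, (∀ i j : ℤ, x (i, j) = Letter.red ↔ j = j0) ∧
          (∀ (i k : ℤ), 1 ≤ k → x (i, j0 + k) = x (i, j0 - k))) }

/-- Color of a boolean: black/white. -/
def colOf : Bool → Letter := fun b => if b then Letter.black else Letter.white

lemma colOf_ne_red (b : Bool) : colOf b ≠ Letter.red := by cases b <;> decide

lemma colOf_inj {a b : Bool} (h : colOf a = colOf b) : a = b := by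
  cases a <;> cases b <;> simp_all [colOf]

/-- Reflection of a height across the row `-1`. -/
def mirrorH (j : ℤ) : ℤ := if 0 ≤ j then j else -2 - j

/-- Black/white content in the square, black elsewhere. -/
def innerSq (n : ℕ) (w : Fin n × Fin n → Bool) (i j : ℤ) : Letter :=
  if h : 0 ≤ i ∧ i < (n : ℤ) ∧ 0 ≤ j ∧ j < (n : ℤ) then
    colOf (w (⟨i.toNat, by omega⟩, ⟨j.toNat, by omega⟩))
  else Letter.black

lemma innerSq_ne_red (n : ℕ) (w : Fin n × Fin n → Bool) (i j : ℤ) :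
    innerSq n w i j ≠ Letter.red := by
  unfold innerSq; split
  · exact colOf_ne_red _
  · exact fun h => Letter.noConfusion h

/-- The mirror configuration with red row at height `-1` and the square `w` above it. -/
def mcfg (n : ℕ) (w : Fin n × Fin n → Bool) : Config Letter :=
  fun p => if p.2 = -1 then Letter.red else innerSq n w p.1 (mirrorH p.2)

lemma mcfg_def (n : ℕ) (w : Fin n × Fin n → Bool) (i j : ℤ) :
    mcfg n w (i, j) = if j = -1 then Letter.red else innerSq n w i (mirrorH j) := rfl

lemma mcfg_mem (n : ℕ) (w : Fin n × Fin n → Bool) : mcfg n w ∈ mirrorShift := by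
  simp only [mirrorShift, Set.mem_setOf_eq]
  refine Or.inr ⟨-1, fun i j => ?_, fun i k hk => ?_⟩
  · constructor
    · intro h
      by_contra hj
      rw [mcfg_def, if_neg hj] at h
      exact innerSq_ne_red _ _ _ _ h
    · intro h; rw [mcfg_def, if_pos h]
  · rw [mcfg_def, mcfg_def, if_neg (by omega), if_neg (by omega)]
    have hm : mirrorH (-1 + k) = mirrorH (-1 - k) := by
      unfold mirrorH; rw [if_pos (by omega), if_neg (by omega)]; ring
    rw [hm]

lemma innerSq_sq (n : ℕ) (w : Fin n × Fin n → Bool) (a b : Fin n) :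
    innerSq n w (a.val : ℤ) (b.val : ℤ) = colOf (w (a, b)) := by
  unfold innerSq
  rw [dif_pos ⟨by omega, by exact_mod_cast a.isLt, by omega, by exact_mod_cast b.isLt⟩]
  congr 2

lemma mcfg_sq (n : ℕ) (w : Fin n × Fin n → Bool) (a b : Fin n) :
    mcfg n w ((a.val : ℤ), (b.val : ℤ)) = colOf (w (a, b)) := by
  rw [mcfg_def, if_neg (by omega),
    show mirrorH (b.val : ℤ) = (b.val : ℤ) from if_pos (by omega)]
  exact innerSq_sq n w a b

lemma mcfg_reflect (n : ℕ) (w : Fin n × Fin n → Bool) (i j : ℤ) (hj : 0 ≤ j) :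
    mcfg n w (i, -2 - j) = mcfg n w (i, j) := by
  rw [mcfg_def, mcfg_def, if_neg (by omega), if_neg (by omega)]
  have hm : mirrorH (-2 - j) = mirrorH j := by
    unfold mirrorH; rw [if_neg (by omega), if_pos hj]; ring
  rw [hm]

lemma mcfg_red_row (n : ℕ) (w : Fin n × Fin n → Bool) (i : ℤ) :
    mcfg n w (i, -1) = Letter.red := by rw [mcfg_def, if_pos rfl]

lemma black_mem : (fun _ => Letter.black : Config Letter) ∈ mirrorShift := by
  simp only [mirrorShift, Set.mem_setOf_eq]
  exact Or.inl (fun p h => Letter.noConfusion h)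

/-- The two-dimensional mirror shift is not sofic. -/
theorem mirrorShift_not_sofic : ¬ IsSofic mirrorShift := by
  classical
  rintro ⟨A', iA', S', π, ⟨F, hFfin, rfl⟩, himg⟩
  -- A' is nonempty
  have hbl := black_mem
  rw [himg] at hbl
  obtain ⟨y₀, hy₀S, hy₀⟩ := hbl
  haveI : Nonempty A' := ⟨y₀ (0, 0)⟩
  set c := Fintype.card A' with hcdef
  -- radius bound for forbidden patterns
  set r : ℕ := hFfin.toFinset.sup (fun P => P.supp.sup (fun p => p.1.natAbs ⊔ p.2.natAbs)) with hrdef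
  have hr : ∀ P ∈ F, ∀ p ∈ P.supp, p.1.natAbs ≤ r ∧ p.2.natAbs ≤ r := by
    intro P hP p hp
    have h1 : P.supp.sup (fun p => p.1.natAbs ⊔ p.2.natAbs) ≤ r :=
      Finset.le_sup (f := fun P : Pattern A' => P.supp.sup (fun p => p.1.natAbs ⊔ p.2.natAbs))
        (hFfin.mem_toFinset.mpr hP)
    have h2 : p.1.natAbs ⊔ p.2.natAbs ≤ P.supp.sup (fun p => p.1.natAbs ⊔ p.2.natAbs) :=
      Finset.le_sup (f := fun p : Cell => p.1.natAbs ⊔ p.2.natAbs) hp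
    have h3 := le_trans h2 h1
    exact ⟨le_trans (le_max_left _ _) h3, le_trans (le_max_right _ _) h3⟩
  set L : ℕ := 2 * r with hLdef
  set n : ℕ := 8 * r * c + 1 with hndef
  -- preimages of the mirror configurations
  have hall : ∀ w : Fin n × Fin n → Bool, ∃ y, y ∈ shiftOf F ∧ π ∘ y = mcfg n w := by
    intro w
    have hm := mcfg_mem n w
    rw [himg] at hm
    obtain ⟨y, hy, hyeq⟩ := hm
    exact ⟨y, hy, hyeq⟩
  choose y hyS hyπ using hall
  -- fingerprint along the boundary strip of width L
  set ι : Type := ((Fin L × Fin n) ⊕ (Fin L × Fin n)) ⊕ ((Fin L × Fin n) ⊕ (Fin L × Fin n))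
    with hιdef
  set Φ : (Fin n × Fin n → Bool) → ι → A' := fun w s =>
    match s with
    | .inl (.inl tj) => y w ((tj.1.val : ℤ), (tj.2.val : ℤ))
    | .inl (.inr tj) => y w ((n : ℤ) - (L : ℤ) + (tj.1.val : ℤ), (tj.2.val : ℤ))
    | .inr (.inl ti) => y w ((ti.2.val : ℤ), (ti.1.val : ℤ))
    | .inr (.inr ti) => y w ((ti.2.val : ℤ), (n : ℤ) - (L : ℤ) + (ti.1.val : ℤ))
    with hΦdef
  have hcard : Fintype.card (ι → A') < Fintype.card (Fin n × Fin n → Bool) := by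
    rw [Fintype.card_fun, Fintype.card_fun]
    simp only [hιdef, Fintype.card_sum, Fintype.card_prod, Fintype.card_fin, Fintype.card_bool]
    have h1 : c ≤ 2 ^ c := (Nat.lt_two_pow_self (n := c)).le
    calc c ^ (L * n + L * n + (L * n + L * n))
        ≤ (2 ^ c) ^ (L * n + L * n + (L * n + L * n)) := Nat.pow_le_pow_left h1 _
      _ = 2 ^ (c * (L * n + L * n + (L * n + L * n))) := by rw [← pow_mul]
      _ < 2 ^ (n * n) := by
          apply Nat.pow_lt_pow_right one_lt_two
          have e1 : c * (L * n + L * n + (L * n + L * n)) = (8 * r * c) * n := by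
            rw [hLdef]; ring
          have e2 : n * n = (8 * r * c) * n + n := by
            conv_lhs => rw [hndef]
            ring
          rw [e1, e2]
          exact Nat.lt_add_of_pos_right (hndef ▸ Nat.succ_pos _)
  obtain ⟨w, w', hne, hΦ⟩ := Fintype.exists_ne_map_eq_of_card_lt Φ hcard
  -- agreement of y w and y w' on the boundary strip
  have hagree : ∀ a b : ℤ, 0 ≤ a → a < n → 0 ≤ b → b < n →
      ¬((L : ℤ) ≤ a ∧ a + L < n ∧ (L : ℤ) ≤ b ∧ b + L < n) →
      y w (a, b) = y w' (a, b) := by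
    intro a b ha0 han hb0 hbn hnot
    have hcases : a < L ∨ (n : ℤ) - L ≤ a ∨ b < L ∨ (n : ℤ) - L ≤ b := by omega
    rcases hcases with h | h | h | h
    · have key : y w (((a.toNat : ℕ) : ℤ), ((b.toNat : ℕ) : ℤ))
          = y w' (((a.toNat : ℕ) : ℤ), ((b.toNat : ℕ) : ℤ)) :=
        congrFun hΦ (Sum.inl (Sum.inl (⟨a.toNat, by omega⟩, ⟨b.toNat, by omega⟩)))
      have ea : ((a.toNat : ℕ) : ℤ) = a := by omega
      have eb : ((b.toNat : ℕ) : ℤ) = b := by omega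
      rwa [ea, eb] at key
    · have key : y w ((n : ℤ) - (L : ℤ) + (((a - ((n : ℤ) - (L : ℤ))).toNat : ℕ) : ℤ),
            ((b.toNat : ℕ) : ℤ))
          = y w' ((n : ℤ) - (L : ℤ) + (((a - ((n : ℤ) - (L : ℤ))).toNat : ℕ) : ℤ),
            ((b.toNat : ℕ) : ℤ)) :=
        congrFun hΦ (Sum.inl (Sum.inr (⟨(a - ((n : ℤ) - (L : ℤ))).toNat, by omega⟩,
          ⟨b.toNat, by omega⟩)))
      have ea : (n : ℤ) - (L : ℤ) + (((a - ((n : ℤ) - (L : ℤ))).toNat : ℕ) : ℤ) = a := by omega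
      have eb : ((b.toNat : ℕ) : ℤ) = b := by omega
      rwa [ea, eb] at key
    · have key : y w (((a.toNat : ℕ) : ℤ), ((b.toNat : ℕ) : ℤ))
          = y w' (((a.toNat : ℕ) : ℤ), ((b.toNat : ℕ) : ℤ)) :=
        congrFun hΦ (Sum.inr (Sum.inl (⟨b.toNat, by omega⟩, ⟨a.toNat, by omega⟩)))
      have ea : ((a.toNat : ℕ) : ℤ) = a := by omega
      have eb : ((b.toNat : ℕ) : ℤ) = b := by omega
      rwa [ea, eb] at key
    · have key : y w (((a.toNat : ℕ) : ℤ),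
            (n : ℤ) - (L : ℤ) + (((b - ((n : ℤ) - (L : ℤ))).toNat : ℕ) : ℤ))
          = y w' (((a.toNat : ℕ) : ℤ),
            (n : ℤ) - (L : ℤ) + (((b - ((n : ℤ) - (L : ℤ))).toNat : ℕ) : ℤ)) :=
        congrFun hΦ (Sum.inr (Sum.inr (⟨(b - ((n : ℤ) - (L : ℤ))).toNat, by omega⟩,
          ⟨a.toNat, by omega⟩)))
      have ea : ((a.toNat : ℕ) : ℤ) = a := by omega
      have eb : (n : ℤ) - (L : ℤ) + (((b - ((n : ℤ) - (L : ℤ))).toNat : ℕ) : ℤ) = b := by omega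
      rwa [ea, eb] at key
  -- the swapped configuration
  set z : Config A' := fun p => if inBn n p then y w' p else y w p with hzdef
  have hz1 : ∀ p : Cell, inBn n p → z p = y w' p := fun p h => if_pos h
  have hz2 : ∀ p : Cell, ¬ inBn n p → z p = y w p := fun p h => if_neg h
  -- z belongs to the SFT
  have hzS : z ∈ shiftOf F := by
    intro P hP hocc
    obtain ⟨u, hu⟩ := hocc
    by_cases hcase : ∃ i : P.supp, (L : ℤ) ≤ ((i : Cell) + u).1 ∧ ((i : Cell) + u).1 + L < n ∧
        (L : ℤ) ≤ ((i : Cell) + u).2 ∧ ((i : Cell) + u).2 + L < n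
    · obtain ⟨i₀, h₀⟩ := hcase
      have hin : ∀ i : P.supp, inBn n ((i : Cell) + u) := by
        intro i
        have b1 := hr P hP _ i.2
        have b2 := hr P hP _ i₀.2
        have e1 : ((i : Cell) + u).1 = (i : Cell).1 + u.1 := rfl
        have e2 : ((i : Cell) + u).2 = (i : Cell).2 + u.2 := rfl
        have e3 : ((i₀ : Cell) + u).1 = (i₀ : Cell).1 + u.1 := rfl
        have e4 : ((i₀ : Cell) + u).2 = (i₀ : Cell).2 + u.2 := rfl
        unfold inBn
        omega
      refine hyS w' P hP ⟨u, fun i => ?_⟩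
      rw [← hu i, hz1 _ (hin i)]
    · refine hyS w P hP ⟨u, fun i => ?_⟩
      rw [← hu i]
      by_cases hb : inBn n ((i : Cell) + u)
      · rw [hz1 _ hb]
        have hb' : 0 ≤ ((i : Cell) + u).1 ∧ ((i : Cell) + u).1 < (n : ℤ) ∧
            0 ≤ ((i : Cell) + u).2 ∧ ((i : Cell) + u).2 < (n : ℤ) := hb
        have hni : ¬((L : ℤ) ≤ ((i : Cell) + u).1 ∧ ((i : Cell) + u).1 + L < n ∧
            (L : ℤ) ≤ ((i : Cell) + u).2 ∧ ((i : Cell) + u).2 + L < n) :=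
          fun hcon => hcase ⟨i, hcon⟩
        have := hagree (((i : Cell) + u).1) (((i : Cell) + u).2)
          hb'.1 hb'.2.1 hb'.2.2.1 hb'.2.2.2 hni
        rwa [Prod.mk.eta] at this
      · rw [hz2 _ hb]
  -- project and derive the contradiction
  have hx1 : ∀ p : Cell, ¬ inBn n p → (π ∘ z) p = mcfg n w p := by
    intro p hp
    show π (z p) = _
    rw [hz2 p hp]
    exact congrFun (hyπ w) p
  have hx2 : ∀ p : Cell, inBn n p → (π ∘ z) p = mcfg n w' p := by
    intro p hp
    show π (z p) = _
    rw [hz1 p hp]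
    exact congrFun (hyπ w') p
  have hmem : π ∘ z ∈ mirrorShift := by
    rw [himg]; exact ⟨z, hzS, rfl⟩
  have hnotB : ¬ inBn n ((0 : ℤ), (-1 : ℤ)) := by unfold inBn; omega
  have hred0 : (π ∘ z) ((0 : ℤ), (-1 : ℤ)) = Letter.red := by
    rw [hx1 _ hnotB]; exact mcfg_red_row n w 0
  simp only [mirrorShift, Set.mem_setOf_eq] at hmem
  rcases hmem with h | ⟨j0, hred, hmir⟩
  · exact h _ hred0
  · have hj0 : j0 = -1 := ((hred 0 (-1)).mp hred0).symm
    subst hj0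
    obtain ⟨q, hq⟩ : ∃ q : Fin n × Fin n, w q ≠ w' q := by
      by_contra h
      push_neg at h
      exact hne (funext h)
    have hk := hmir (q.1.val : ℤ) ((q.2.val : ℤ) + 1) (by omega)
    have e1 : (-1 : ℤ) + ((q.2.val : ℤ) + 1) = (q.2.val : ℤ) := by ring
    have e2 : (-1 : ℤ) - ((q.2.val : ℤ) + 1) = -2 - (q.2.val : ℤ) := by ring
    rw [e1, e2] at hk
    have hbin : inBn n ((q.1.val : ℤ), (q.2.val : ℤ)) := by
      have hlt1 : ((q.1.val : ℕ) : ℤ) < (n : ℤ) := by exact_mod_cast q.1.isLt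
      have hlt2 : ((q.2.val : ℕ) : ℤ) < (n : ℤ) := by exact_mod_cast q.2.isLt
      exact ⟨Int.natCast_nonneg _, hlt1, Int.natCast_nonneg _, hlt2⟩
    have hbout : ¬ inBn n ((q.1.val : ℤ), -2 - (q.2.val : ℤ)) := by unfold inBn; omega
    rw [hx2 _ hbin, hx1 _ hbout, mcfg_reflect n w _ _ (by omega)] at hk
    have h1 : mcfg n w' ((q.1.val : ℤ), (q.2.val : ℤ)) = colOf (w' q) := by
      have := mcfg_sq n w' q.1 q.2
      rwa [Prod.mk.eta] at this
    have h2 : mcfg n w ((q.1.val : ℤ), (q.2.val : ℤ)) = colOf (w q) := by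
      have := mcfg_sq n w q.1 q.2
      rwa [Prod.mk.eta] at this
    rw [h1, h2] at hk
    exact hq (colOf_inj hk.symm)
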